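/- If a torsionless abelian group G binds some subgroup of infinite rank, then there is a homomorphic image G' of G with G' ⊆ P = ∏_{n∈ℕ} ℤ such that the group G' + S binds S, where S = ⊕_{n∈ℕ} ℤ. -/

import Mathlib

open Cardinal

def Torsionless (G : Type*) [AddCommGroup G] : Prop :=
  ∀ g : G, g ≠ 0 → ∃ f : G →+ ℤ, f g ≠ 0

/-- `G` binds a subgroup `H` if every homomorphism from `G` to a free abelian
group maps `H` into a subgroup of finite rank. -/
def Binds.{u} {G : Type*} [AddCommGroup G] (H : AddSubgroup G) : Prop :=
  ∀ (ι : Type u) (f : G →+ (ι →₀ ℤ)), Module.rank ℤ (H.map f) < ℵ₀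

/-- `S = ⊕_{n∈ℕ} ℤ`, the finitely supported sequences, as a subgroup of the
Baer–Specker group `P = ∏_{n∈ℕ} ℤ`. -/
def SpeckerS : AddSubgroup (ℕ → ℤ) where
  carrier := {x | (Function.support x).Finite}
  zero_mem' := by simp
  add_mem' {a b} ha hb := (ha.union hb).subset (Function.support_add a b)
  neg_mem' {a} ha := by simpa using ha

/-!
Choose an independent sequence `v 0, v 1, …` in `H`. Since `G` is torsionless, the evaluations
`f ↦ (f (v 0), …, f (v n))` span `ℚ^(n+1)` rationally, so there are `f n : G →+ ℤ` with
`f n (v m) = 0` for `m < n` and `f n (v n) ≠ 0`. For `g = (f n)ₙ : G → P` the vector `g (v n)`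
is supported on `[0, n]` with nonzero last entry, so by triangularity every element of `S` has a
nonzero multiple in `g(H)`. Hence for any `φ` from `g(G) + S` to a free group, `φ(S)` has no
larger rank than `φ(g(H))`, which is finite because `G` binds `H`.
-/

theorem exists_int_smul_mem_of_mem_span_rat {V : Type*} [AddCommGroup V] [Module ℚ V]
    {L : AddSubgroup V} {x : V} (hx : x ∈ Submodule.span ℚ (L : Set V)) :
    ∃ d : ℤ, d ≠ 0 ∧ d • x ∈ L := by
  induction hx using Submodule.span_induction with
  | mem x hx => exact ⟨1, one_ne_zero, by simpa using hx⟩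
  | zero => exact ⟨1, one_ne_zero, by simp⟩
  | add x y _ _ hx hy =>
    obtain ⟨a, ha, hax⟩ := hx
    obtain ⟨b, hb, hby⟩ := hy
    refine ⟨a * b, mul_ne_zero ha hb, ?_⟩
    rw [smul_add, mul_comm, mul_smul, mul_comm, mul_smul]
    exact L.add_mem (L.zsmul_mem hax b) (L.zsmul_mem hby a)
  | smul q x _ hx =>
    obtain ⟨a, ha, hax⟩ := hx
    refine ⟨a * q.den, mul_ne_zero ha (by exact_mod_cast q.den_ne_zero), ?_⟩
    have : ((a * q.den : ℤ) : ℚ) * q = q.num * a := by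
      push_cast; rw [mul_assoc, Rat.den_mul_eq_num]; ring
    rw [← Int.cast_smul_eq_zsmul ℚ, smul_smul, this, mul_smul, Int.cast_smul_eq_zsmul,
      Int.cast_smul_eq_zsmul]
    exact L.zsmul_mem hax _

namespace Submodule

variable {R M : Type*} [CommRing R] [IsDomain R] [AddCommGroup M] [Module R M]

def saturation (N : Submodule R M) : Submodule R M where
  carrier := {x | ∃ a : R, a ≠ 0 ∧ a • x ∈ N}
  zero_mem' := ⟨1, one_ne_zero, by simp⟩
  add_mem' := by
    rintro x y ⟨a, ha, hx⟩ ⟨b, hb, hy⟩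
    refine ⟨b * a, mul_ne_zero hb ha, ?_⟩
    rw [smul_add, mul_smul, mul_comm, mul_smul]
    exact N.add_mem (N.smul_mem b hx) (N.smul_mem a hy)
  smul_mem' c x := by
    rintro ⟨a, ha, hx⟩
    exact ⟨a, ha, by rw [smul_comm]; exact N.smul_mem c hx⟩

variable {N : Submodule R M}

theorem le_saturation : N ≤ N.saturation := fun x hx => ⟨1, one_ne_zero, by simpa using hx⟩

theorem mem_saturation_of_smul_mem {a : R} {x : M} (ha : a ≠ 0) (hx : a • x ∈ N.saturation) :
    x ∈ N.saturation := by
  obtain ⟨b, hb, hbx⟩ := hx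
  exact ⟨b * a, mul_ne_zero hb ha, by rwa [mul_smul]⟩

theorem rank_le_of_le_saturation {P : Submodule R M} (hP : P ≤ N.saturation) :
    Module.rank R P ≤ Module.rank R N := by
  rw [Module.rank_def]
  refine ciSup_le' fun ⟨s, hs⟩ => ?_
  choose a ha haN using fun x : s => hP (x : P).2
  have hli : LinearIndependent R fun x : s => (⟨a x • (x : M), haN x⟩ : N) := by
    rw [← LinearMap.linearIndependent_iff N.subtype N.ker_subtype]
    have hsM := hs.map' P.subtype P.ker_subtype
    rw [linearIndependent_iff'] at hsM ⊢
    intro t g hg i hi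
    have := hsM t (fun x => g x * a x) (by simpa [mul_smul] using hg) i hi
    exact (mul_eq_zero.mp this).resolve_right (ha i)
  simpa using hli.cardinal_lift_le_rank

end Submodule

theorem exists_linearIndependent_nat_of_aleph0_le_rank {R M : Type*} [CommRing R] [IsDomain R]
    [AddCommGroup M] [Module R M] (h : ℵ₀ ≤ Module.rank R M) :
    ∃ v : ℕ → M, LinearIndependent R v := by
  obtain ⟨s, hs, hli⟩ := exists_set_linearIndependent_of_isDomain R M
  have : Infinite s := Cardinal.infinite_iff.mpr (hs ▸ h)
  let e := Infinite.natEmbedding s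
  exact ⟨fun n => e n, hli.comp e e.injective⟩

section Torsionless

variable {G ι : Type*} [AddCommGroup G] [Fintype ι] {v : ι → G}

theorem Torsionless.exists_sum_mul_ne_zero (hG : Torsionless G) (hv : LinearIndependent ℤ v)
    {c : ι → ℤ} (hc : c ≠ 0) : ∃ f : G →+ ℤ, ∑ i, c i * f (v i) ≠ 0 := by
  obtain ⟨f, hf⟩ := hG (∑ i, c i • v i) fun h0 =>
    hc (funext (Fintype.linearIndependent_iff.mp hv c h0))
  exact ⟨f, by simpa [map_sum] using hf⟩

variable (v) in
noncomputable def evalDual : (G →+ ℤ) →+ Module.Dual ℚ (ι → ℚ) where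
  toFun f := ∑ j, (f (v j) : ℚ) • LinearMap.proj j
  map_zero' := by simp
  map_add' f f' := by simp [add_smul, Finset.sum_add_distrib]

theorem evalDual_apply (f : G →+ ℤ) (z : ι → ℚ) :
    evalDual v f z = ∑ j, (f (v j) : ℚ) * z j := by
  simp [evalDual]

theorem Torsionless.span_range_evalDual (hG : Torsionless G) (hv : LinearIndependent ℤ v) :
    Submodule.span ℚ ((evalDual v).range : Set (Module.Dual ℚ (ι → ℚ))) = ⊤ := by
  refine Submodule.span_eq_top_of_ne_zero fun z hz => ?_
  obtain ⟨b, hb⟩ := IsLocalization.exist_integer_multiples_of_finite (nonZeroDivisors ℤ) z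
  choose c hc using hb
  simp only [algebraMap_int_eq, eq_intCast, zsmul_eq_mul] at hc
  have hb0 : (b : ℚ) ≠ 0 := by exact_mod_cast nonZeroDivisors.coe_ne_zero b
  have hc0 : c ≠ 0 := fun h0 => hz (funext fun i => by simpa [h0, hb0] using (hc i).symm)
  obtain ⟨f, hf⟩ := hG.exists_sum_mul_ne_zero hv hc0
  refine ⟨evalDual v f, ⟨f, rfl⟩, fun h0 => hf ?_⟩
  have hcast : ((∑ i, c i * f (v i) : ℤ) : ℚ) = b * evalDual v f z := by
    rw [evalDual_apply, Finset.mul_sum]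
    push_cast
    exact Finset.sum_congr rfl fun j _ => by rw [hc]; ring
  rw [h0, mul_zero] at hcast
  exact_mod_cast hcast

theorem Torsionless.exists_hom_vanishing_off (hG : Torsionless G)
    (hv : LinearIndependent ℤ v) (i : ι) :
    ∃ f : G →+ ℤ, (∀ j ≠ i, f (v j) = 0) ∧ f (v i) ≠ 0 := by
  classical
  obtain ⟨d, hd, f, hf⟩ := exists_int_smul_mem_of_mem_span_rat
    ((hG.span_range_evalDual hv).symm ▸ Submodule.mem_top :
      LinearMap.proj (R := ℚ) (φ := fun _ : ι => ℚ) i ∈ _)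
  have hfv (j : ι) : (f (v j) : ℚ) = if j = i then (d : ℚ) else 0 := by
    simpa [evalDual_apply, Pi.single_apply, eq_comm] using LinearMap.congr_fun hf (Pi.single j 1)
  refine ⟨f, fun j hj => ?_, fun h0 => hd ?_⟩
  · exact_mod_cast (hfv j).trans (if_neg hj)
  · have hfi := hfv i
    rw [if_pos rfl, h0, Int.cast_zero] at hfi
    exact_mod_cast hfi.symm

end Torsionless

theorem speckerS_le_saturation {N : Submodule ℤ (ℕ → ℤ)} {w : ℕ → ℕ → ℤ}
    (hwN : ∀ n, w n ∈ N) (hw : ∀ n k, n < k → w n k = 0) (hwn : ∀ n, w n n ≠ 0) :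
    SpeckerS.toIntSubmodule ≤ N.saturation := by
  have hsum {x : ℕ → ℤ} {s : Finset ℕ} (hx : Function.support x ⊆ s) :
      ∑ k ∈ s, x k • Pi.single k 1 = x := by
    ext i
    simp only [Finset.sum_apply, Pi.smul_apply, Pi.single_apply, smul_eq_mul, mul_ite, mul_one,
      mul_zero, Finset.sum_ite_eq]
    split_ifs with hi
    · rfl
    · exact (Function.notMem_support.mp fun h => hi (hx h)).symm
  have hsingle (n : ℕ) : Pi.single n 1 ∈ N.saturation := by
    induction n using Nat.strong_induction_on with
    | _ n ih =>
    refine Submodule.mem_saturation_of_smul_mem (hwn n) ?_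
    have hsplit := hsum (x := w n) (s := Finset.range (n + 1)) fun k hk => by
      by_contra hkn
      exact hk (hw n k (by simpa using hkn))
    rw [Finset.sum_range_succ, ← eq_sub_iff_add_eq'] at hsplit
    rw [hsplit]
    exact sub_mem (Submodule.le_saturation (hwN n))
      (sum_mem fun k hk => Submodule.smul_mem _ _ (ih k (Finset.mem_range.mp hk)))
  intro x hx
  have hfin : (Function.support x).Finite := hx
  rw [← hsum hfin.coe_toFinset.symm.subset]
  exact sum_mem fun k _ => Submodule.smul_mem _ _ (hsingle k)

theorem stmt_8.{u} {G : Type*} [AddCommGroup G] (hG : Torsionless G)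
    (H : AddSubgroup G) (hrk : ℵ₀ ≤ Module.rank ℤ H) (hbind : Binds.{u} H) :
    ∃ g : G →+ (ℕ → ℤ),
      Binds.{u} (SpeckerS.addSubgroupOf (g.range ⊔ SpeckerS)) := by
  obtain ⟨v, hv⟩ := exists_linearIndependent_nat_of_aleph0_le_rank hrk
  have hind : LinearIndependent ℤ fun n => (v n : G) := hv.map' H.subtype.toIntLinearMap
    (LinearMap.ker_eq_bot.mpr Subtype.val_injective)
  choose f hf0 hfne using fun n => (hG.exists_hom_vanishing_off
    (hind.comp (Fin.val : Fin (n + 1) → ℕ) Fin.val_injective) (Fin.last n))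
  let g := AddMonoidHom.pi f
  have hS : SpeckerS.toIntSubmodule ≤ (H.map g).toIntSubmodule.saturation :=
    speckerS_le_saturation (w := fun n => g (v n)) (fun n => ⟨v n, (v n).2, rfl⟩)
      (fun n k hnk => hf0 k ⟨n, by omega⟩ (Fin.ne_of_lt hnk)) (fun n => hfne n)
  let K := g.range ⊔ SpeckerS
  let incl : G →+ K := g.codRestrict K fun x => AddSubgroup.mem_sup_left ⟨x, rfl⟩
  refine ⟨g, fun ι φ => lt_of_le_of_lt (Submodule.rank_le_of_le_saturation
    (P := ((SpeckerS.addSubgroupOf K).map φ).toIntSubmodule)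
    (N := (H.map (φ.comp incl)).toIntSubmodule) ?_) (hbind ι _)⟩
  rintro _ ⟨x, hx, rfl⟩
  obtain ⟨d, hd, y, hy, hdy⟩ := hS (AddSubgroup.mem_addSubgroupOf.mp hx)
  refine ⟨d, hd, y, hy, ?_⟩
  have : incl y = d • x := Subtype.ext hdy
  simp [this]
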